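/- arXiv:2506.05254 — 3 statements merged into one kernel-verified Lean document; each statement's English description precedes it below -/
import Mathlib

section
/- Let m ≥ 2 and n ≥ 1, and write the multiplier polynomial P_{m,n}(x) = x^k + ∑_{i=0}^{k−1} b_i x^i ∈ ℤ[x]. Then for each ℓ = 1, ..., k, the 2-adic valuation satisfies v_2(b_{k−ℓ}) ≥ nℓ + 1. -/
open Polynomial Finset

noncomputable section

/-- The critical-orbit polynomials: `a 1 = c`, `a (i+1) = (a i)^2 + c`. -/
def a : ℕ → Polynomial ℤ
  | 0 => 0
  | n + 1 => (a n) ^ 2 + X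

/-- The image of an integer polynomial in the field `ℚ(c)` of rational functions. -/
def toRF (f : Polynomial ℤ) : RatFunc ℚ :=
  algebraMap (Polynomial ℚ) (RatFunc ℚ) (f.map (Int.castRingHom ℚ))

/-- The Möbius-product formula defining the Misiurewicz polynomial `G_{m,n}`. -/
def Gform (m n : ℕ) : RatFunc ℚ :=
  (∏ k ∈ n.divisors, (toRF (a (m + k - 1) + a (m - 1))) ^ (ArithmeticFunction.moebius (n / k))) *
    (if n ∣ (m - 1) then
      ∏ k ∈ n.divisors, (toRF (a k)) ^ (-(ArithmeticFunction.moebius (n / k)))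
    else 1)

/-- `G` is the Misiurewicz polynomial `G_{m,n}`. -/
def IsMisiurewicz (m n : ℕ) (G : Polynomial ℤ) : Prop :=
  G.Monic ∧ toRF G = Gform m n

/-- The multiplier `λ_{m,n}(α) = 2^n ∏_{i=0}^{n−1} a_{m+i}(α)`. -/
def lam (m n : ℕ) {K : Type*} [Field K] (α : K) : K :=
  (2 : K) ^ n * ∏ i ∈ range n, Polynomial.aeval α (a (m + i))

section Aux

variable {A : Type*} [CommRing A] (v : A → WithTop ℝ)

lemma aux_sum (hadd : ∀ x y, min (v x) (v y) ≤ v (x + y))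
    (c : WithTop ℝ) (hc : c < ⊤) (hv0 : v 0 = ⊤) :
    ∀ (s : Multiset A), (∀ x ∈ s, c < v x) → c < v s.sum := by
  intro s
  induction s using Multiset.induction_on with
  | empty => intro _; simpa [hv0] using hc
  | cons x t ih =>
      intro h
      have h1 : c < v x := h x (Multiset.mem_cons_self x t)
      have h2 : c < v t.sum := ih fun y hy => h y (Multiset.mem_cons_of_mem hy)
      calc c < min (v x) (v t.sum) := lt_min h1 h2
        _ ≤ v (x + t.sum) := hadd x t.sum
        _ = v (Multiset.sum (x ::ₘ t)) := by rw [Multiset.sum_cons]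

lemma aux_prod (hmul : ∀ x y, v (x * y) = v x + v y) (hv1 : v 1 = 0) (b : ℝ) :
    ∀ (t : Multiset A), t ≠ 0 → (∀ x ∈ t, (b : WithTop ℝ) < v x) →
      ((Multiset.card t * b : ℝ) : WithTop ℝ) < v t.prod := by
  intro t
  induction t using Multiset.induction_on with
  | empty => intro h; exact absurd rfl h
  | cons x t ih =>
      intro _ h
      have h1 : (b : WithTop ℝ) < v x := h x (Multiset.mem_cons_self x t)
      rw [Multiset.prod_cons, hmul]
      rcases eq_or_ne t 0 with rfl | ht
      · simpa [hv1] using h1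
      · have h2 := ih ht fun y hy => h y (Multiset.mem_cons_of_mem hy)
        have hre : (Multiset.card (x ::ₘ t) * b : ℝ) = b + Multiset.card t * b := by
          push_cast [Multiset.card_cons]
          ring
        rw [hre, WithTop.coe_add]
        exact WithTop.add_lt_add_of_lt_of_le (by exact WithTop.coe_ne_top) h1 h2.le

end Aux

/-- Proposition 2.5: write the multiplier polynomial
`P_{m,n}(x) = ∏_j (x − λ_{m,n}(α_j)) = x^k + ∑_{i<k} b_i x^i ∈ ℤ[x]`, where `α_j` runs over
the roots of `G_{m,n}`. Given (for any extension `v` of the 2-adic valuation) that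
`v(λ_{m,n}(α_j)) > n` for each root, one has `v_2(b_{k−ℓ}) ≥ nℓ + 1` for `ℓ = 1, …, k`. -/
theorem multiplierPoly_coeff_val (m n : ℕ) (hm : 2 ≤ m) (hn : 1 ≤ n)
    (G P : Polynomial ℤ) (hG : IsMisiurewicz m n G)
    (hP : P.map (algebraMap ℤ (AlgebraicClosure ℚ)) =
      (((G.map (algebraMap ℤ (AlgebraicClosure ℚ))).roots).map
        (fun α => X - C (lam m n α))).prod)
    (v : AlgebraicClosure ℚ → WithTop ℝ)
    (hmul : ∀ x y, v (x * y) = v x + v y)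
    (hadd : ∀ x y, min (v x) (v y) ≤ v (x + y))
    (hext : ∀ r : ℤ, r ≠ 0 →
      v ((r : AlgebraicClosure ℚ)) = ((padicValInt 2 r : ℝ) : WithTop ℝ))
    (hlam : ∀ α ∈ (G.map (algebraMap ℤ (AlgebraicClosure ℚ))).roots,
      (n : WithTop ℝ) < v (lam m n α)) :
    ∀ ℓ : ℕ, 1 ≤ ℓ → ℓ ≤ P.natDegree →
      ((n * ℓ + 1 : ℕ) : ℕ∞) ≤ emultiplicity (2 : ℤ) (P.coeff (P.natDegree - ℓ)) := by
  intro ℓ hℓ1 hℓk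
  haveI : Fact (Nat.Prime 2) := ⟨Nat.prime_two⟩
  set φ := algebraMap ℤ (AlgebraicClosure ℚ) with hφ
  have hφinj : Function.Injective φ := by
    rw [hφ]
    exact RingHom.injective_int _
  -- basic valuation facts
  have hv1 : v 1 = 0 := by
    have := hext 1 one_ne_zero
    simpa [padicValInt.one] using this
  have hv0 : v 0 = ⊤ := by
    have h2 : v ((2 : ℤ) : AlgebraicClosure ℚ) = ((1 : ℝ) : WithTop ℝ) := by
      have := hext 2 two_ne_zero
      rw [this]
      norm_num [padicValInt, padicValNat.self]
    have : v 0 = ((1 : ℝ) : WithTop ℝ) + v 0 := by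
      calc v 0 = v (((2 : ℤ) : AlgebraicClosure ℚ) * 0) := by rw [mul_zero]
        _ = ((1 : ℝ) : WithTop ℝ) + v 0 := by rw [hmul, h2]
    cases h : v 0 with
    | top => rfl
    | coe r =>
        rw [h, ← WithTop.coe_add] at this
        have := WithTop.coe_injective this
        linarith
  -- the multiset of multipliers
  set s : Multiset (AlgebraicClosure ℚ) :=
    ((G.map φ).roots).map (lam m n) with hs
  have hPmap : P.map φ = (s.map fun t => X - C t).prod := by
    rw [hP, hs, Multiset.map_map]
    rfl
  have hcard : Multiset.card s = P.natDegree := by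
    have := natDegree_multiset_prod_X_sub_C_eq_card s
    rw [← hPmap] at this
    rw [← this, natDegree_map_eq_of_injective hφinj]
  -- the coefficient
  have hsub : Multiset.card s - (P.natDegree - ℓ) = ℓ := by omega
  have hcoeff : φ (P.coeff (P.natDegree - ℓ)) = (-1) ^ ℓ * s.esymm ℓ := by
    rw [← coeff_map, hPmap, Multiset.prod_X_sub_C_coeff s (by omega), hsub]
  -- each summand of esymm has valuation > n * ℓ
  have hesymm : ((↑(n * ℓ) : ℝ) : WithTop ℝ) < v (s.esymm ℓ) := by
    rw [Multiset.esymm]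
    refine aux_sum v hadd _ (WithTop.coe_lt_top _) hv0 _ ?_
    intro x hx
    simp only [Multiset.mem_map, Multiset.mem_powersetCard] at hx
    obtain ⟨t, ⟨hts, htc⟩, rfl⟩ := hx
    have ht0 : t ≠ 0 := by
      intro h; rw [h] at htc; simp at htc; omega
    have := aux_prod v hmul hv1 (n : ℝ) t ht0 ?_
    · rw [htc] at this
      convert this using 2
      push_cast
      ring
    · intro y hy
      have hys : y ∈ s := Multiset.mem_of_le hts hy
      rw [hs] at hys
      obtain ⟨α, hα, rfl⟩ := Multiset.mem_map.mp hys
      exact hlam α hα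
  -- conclude
  set b : ℤ := P.coeff (P.natDegree - ℓ) with hb
  rcases eq_or_ne b 0 with h0 | h0
  · rw [h0, emultiplicity_zero]; exact le_top
  have hvb : v (φ b) = ((padicValInt 2 b : ℝ) : WithTop ℝ) := by
    have : φ b = ((b : ℤ) : AlgebraicClosure ℚ) := by simp [hφ]
    rw [this]; exact hext b h0
  have hneg : v (((-1 : AlgebraicClosure ℚ)) ^ ℓ) = 0 := by
    have e : ((-1 : AlgebraicClosure ℚ)) ^ ℓ = (((-1 : ℤ) ^ ℓ : ℤ) : AlgebraicClosure ℚ) := by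
      push_cast; ring
    rw [e, hext _ (pow_ne_zero ℓ (by norm_num))]
    have hna : ((-1 : ℤ) ^ ℓ).natAbs = 1 := by simp [Int.natAbs_pow]
    simp [padicValInt, hna]
  have hvbig : ((↑(n * ℓ) : ℝ) : WithTop ℝ) < v (φ b) := by
    rw [hcoeff, hmul, hneg, zero_add]
    exact hesymm
  rw [hvb] at hvbig
  have hlt : (n * ℓ : ℕ) < padicValInt 2 b := by
    have := WithTop.coe_lt_coe.mp hvbig
    exact_mod_cast this
  have hdvd : (2 : ℤ) ^ (n * ℓ + 1) ∣ b := by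
    rw [show (2 : ℤ) = ((2 : ℕ) : ℤ) by norm_num, padicValInt_dvd_iff]
    exact Or.inr (by omega)
  exact le_emultiplicity_of_pow_dvd hdvd
end
end

section
/- Let m ≥ 2 and n ≥ 1. Then T(∏_{i=m−1}^{m+n−2} a_i, a_{m+n−1} + a_{m−1}) equals 2 − 2^{n+1} if m = 2, and equals 2^{m−2} − 2^{m+n−2} if m ≥ 3. Here T(f,g) is the sum of f over the roots of g with multiplicity. -/
open Polynomial Finset

noncomputable section

/-- The image of an integer polynomial in `ℂ[c]`. -/
def c2 (f : Polynomial ℤ) : Polynomial ℂ := f.map (Int.castRingHom ℂ)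

/-- `T f g`: the sum of `f` over the roots of `g`, with multiplicity. -/
def T (f g : Polynomial ℂ) : ℂ := (g.roots.map (fun c => f.eval c)).sum


lemma sum_eval_roots_multiset (s : Multiset ℂ) :
    ∀ F q r : Polynomial ℂ,
      F * derivative (s.map fun z => (X : Polynomial ℂ) - C z).prod
        = q * (s.map fun z => (X : Polynomial ℂ) - C z).prod + r →
      r.degree < (Multiset.card s : ℕ) →
      (s.map fun z => F.eval z).sum = r.coeff (Multiset.card s - 1) := by
  induction s using Multiset.induction_on with
  | empty =>
    intro F q r h hdeg
    have hr : r = 0 := by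
      by_contra h0
      rw [degree_eq_natDegree h0] at hdeg
      simp at hdeg
    simp [hr]
  | cons z t IH =>
    intro F q r h hdeg
    set Gt : Polynomial ℂ := (t.map fun z => (X : Polynomial ℂ) - C z).prod with hGt
    have hGtm : Gt.Monic :=
      monic_multiset_prod_of_monic _ _ (fun z _ => monic_X_sub_C z)
    have hGtd : Gt.natDegree = Multiset.card t := by
      rw [hGt, natDegree_multiset_prod_of_monic]
      · rw [Multiset.map_map]
        simp [Function.comp, natDegree_X_sub_C]
      · intro p hp
        obtain ⟨z, _, rfl⟩ := Multiset.mem_map.mp hp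
        exact monic_X_sub_C z
    have hprod : ((z ::ₘ t).map fun z => (X : Polynomial ℂ) - C z).prod
        = (X - C z) * Gt := by rw [Multiset.map_cons, Multiset.prod_cons]
    rw [hprod] at h
    have hdG : derivative ((X - C z) * Gt) = Gt + (X - C z) * derivative Gt := by
      rw [derivative_mul]; simp
    rw [hdG] at h
    set u : Polynomial ℂ := F /ₘ (X - C z) with hu
    have hF : C (F.eval z) + (X - C z) * u = F := by
      rw [hu, ← modByMonic_X_sub_C_eq_C_eval]
      exact modByMonic_add_div F (X - C z)
    set w : Polynomial ℂ := F * derivative Gt + u * Gt - q * Gt with hw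
    have hkey : (X - C z) * w = r - C (F.eval z) * Gt := by
      rw [hw]; linear_combination h + Gt * hF
    have hcard : Multiset.card (z ::ₘ t) = Multiset.card t + 1 := by simp
    rw [hcard] at hdeg
    have hGtdeg : Gt.degree ≤ (Multiset.card t : ℕ) := by
      rw [← hGtd]; exact degree_le_natDegree
    have hwdeg : w.degree < (Multiset.card t : ℕ) := by
      rcases eq_or_ne w 0 with h0 | h0
      · rw [h0, degree_zero]
        exact bot_lt_iff_ne_bot.mpr (by simp)
      · have h2 : (r - C (F.eval z) * Gt).degree < ((Multiset.card t + 1 : ℕ) : WithBot ℕ) := by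
          apply lt_of_le_of_lt (degree_sub_le _ _)
          apply max_lt hdeg
          apply lt_of_le_of_lt (degree_mul_le _ _)
          apply lt_of_le_of_lt (add_le_add degree_C_le hGtdeg)
          rw [zero_add]
          exact_mod_cast Nat.lt_succ_self _
        have h3 : 1 + w.degree < ((Multiset.card t + 1 : ℕ) : WithBot ℕ) := by
          rw [show (1 : WithBot ℕ) + w.degree = ((X - C z) * w).degree by
            rw [degree_mul, degree_X_sub_C], hkey]
          exact h2
        rw [degree_eq_natDegree h0] at h3 ⊢
        rw [show (1 : WithBot ℕ) + (w.natDegree : WithBot ℕ)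
            = ((w.natDegree + 1 : ℕ) : WithBot ℕ) by push_cast; ring] at h3
        have h4 : w.natDegree + 1 < Multiset.card t + 1 := by exact_mod_cast h3
        exact_mod_cast Nat.lt_of_succ_lt_succ h4
    have hIH := IH F (q - u) w (by rw [hw]; ring) hwdeg
    have hr : r = C (F.eval z) * Gt + (X - C z) * w := by linear_combination - hkey
    rw [Multiset.map_cons, Multiset.sum_cons, hIH, hcard, Nat.add_sub_cancel, hr,
      coeff_add, coeff_C_mul, ← hGtd, hGtm.coeff_natDegree, mul_one, hGtd]
    cases hn : Multiset.card t with
    | zero =>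
      have hw0 : w = 0 := by
        by_contra h0
        rw [degree_eq_natDegree h0, hn] at hwdeg
        exact absurd hwdeg (by exact_mod_cast Nat.not_lt_zero _)
      simp [hw0]
    | succ k =>
      have hz : w.coeff (k + 1) = 0 :=
        coeff_eq_zero_of_degree_lt (by rw [hn] at hwdeg; exact_mod_cast hwdeg)
      rw [mul_comm (X - C z) w, coeff_mul_X_sub_C, hz, zero_mul, sub_zero]
      norm_num

lemma a_monic_natDegree (k : ℕ) : (a (k + 1)).Monic ∧ (a (k + 1)).natDegree = 2 ^ k := by
  induction k with
  | zero =>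
    have h1 : a 1 = X := by
      show (a 0) ^ 2 + X = X
      show (0 : Polynomial ℤ) ^ 2 + X = X
      simp
    rw [h1]
    exact ⟨monic_X, natDegree_X⟩
  | succ k ih =>
    have h1 : a (k + 2) = (a (k + 1)) ^ 2 + X := rfl
    have hpm : ((a (k + 1)) ^ 2).Monic := ih.1.pow 2
    have hpd : ((a (k + 1)) ^ 2).natDegree = 2 ^ (k + 1) := by
      rw [natDegree_pow, ih.2]; ring
    have hdlt : (X : Polynomial ℤ).degree < ((a (k + 1)) ^ 2).degree := by
      rw [degree_X, degree_eq_natDegree hpm.ne_zero, hpd]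
      exact_mod_cast Nat.one_lt_two_pow_iff.mpr (Nat.succ_ne_zero k)
    constructor
    · rw [h1]; exact hpm.add_of_left hdlt
    · rw [h1, natDegree_add_eq_left_of_degree_lt hdlt, hpd]

lemma T_eq_coeff (F g q r : Polynomial ℂ) (hg : g.Monic)
    (h : F * derivative g = q * g + r) (hr : r.degree < (g.natDegree : ℕ)) :
    T F g = r.coeff (g.natDegree - 1) := by
  have hsplit : Splits g := IsAlgClosed.splits g
  have hcard : Multiset.card g.roots = g.natDegree := by
    exact splits_iff_card_roots.mp hsplit
  have hprod : (g.roots.map fun z => (X : Polynomial ℂ) - C z).prod = g :=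
    prod_multiset_X_sub_C_of_monic_of_roots_card_eq hg hcard
  have := sum_eval_roots_multiset g.roots F q r (by rw [hprod]; exact h)
    (by rw [hcard]; exact hr)
  rw [hcard] at this
  exact this


lemma prodA (M N : ℕ) : (∏ i ∈ Icc (M + 1) (M + N), a i).Monic ∧
    (∏ i ∈ Icc (M + 1) (M + N), a i).natDegree = 2 ^ (M + N) - 2 ^ M := by
  induction N with
  | zero =>
    rw [show M + 0 = M from rfl, Finset.Icc_eq_empty (by omega), Finset.prod_empty]
    exact ⟨monic_one, by simp⟩
  | succ N ih =>
    rw [show M + (N + 1) = (M + N) + 1 from rfl,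
      Finset.prod_Icc_succ_top (by omega)]
    have hm := (a_monic_natDegree (M + N)).1
    have hd := (a_monic_natDegree (M + N)).2
    refine ⟨ih.1.mul hm, ?_⟩
    rw [ih.1.natDegree_mul hm, ih.2, hd]
    have h1 : (1:ℕ) ≤ 2 ^ M := Nat.one_le_two_pow
    have h2 : 2 ^ M ≤ 2 ^ (M + N) := Nat.pow_le_pow_right (by norm_num) (by omega)
    have h3 : 2 ^ (M + N + 1) = 2 * 2 ^ (M + N) := by ring
    omega

lemma derivA (k : ℕ) : (derivative (a (k + 1))).natDegree = 2 ^ k - 1 ∧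
    (derivative (a (k + 1))).coeff (2 ^ k - 1) = 2 ^ k := by
  have hm := (a_monic_natDegree k).1
  have hd := (a_monic_natDegree k).2
  have h1 : (1:ℕ) ≤ 2 ^ k := Nat.one_le_two_pow
  have hc : (derivative (a (k + 1))).coeff (2 ^ k - 1) = 2 ^ k := by
    rw [coeff_derivative, show 2 ^ k - 1 + 1 = 2 ^ k from by omega, ← hd,
      hm.coeff_natDegree, one_mul, hd]
    rw [Nat.cast_sub h1]
    push_cast
    ring
  refine ⟨le_antisymm ?_ ?_, hc⟩
  · have := natDegree_derivative_le (a (k + 1))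
    omega
  · exact le_natDegree_of_ne_zero (by rw [hc]; positivity)

lemma a_one : a 1 = X := by
  show (a 0) ^ 2 + X = X
  show ((0 : Polynomial ℤ)) ^ 2 + X = X
  simp

theorem main (M N : ℕ) :
    T (c2 (∏ i ∈ Icc (M + 1) (M + N + 1), a i)) (c2 (a (M + N + 2) + a (M + 1)))
      = ((((if M = 0 then 1 else 0) + 2 ^ M
          - 2 ^ (M + N + 1) * (if M = 0 then 2 else 1) : ℤ)) : ℂ) := by
  set P : Polynomial ℤ := ∏ i ∈ Icc (M + 1) (M + N + 1), a i with hP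
  set E : Polynomial ℤ := ∏ i ∈ Icc (M + 1) (M + N), a i with hE
  set dA : Polynomial ℤ := derivative (a (M + 1)) with hdA
  set dB : Polynomial ℤ := derivative (a (M + N + 1)) with hdB
  set g : Polynomial ℤ := a (M + N + 2) + a (M + 1) with hg
  set q : Polynomial ℤ := 2 * E * dB with hq
  set s : Polynomial ℤ := a (M + 1) + X with hs
  set r : Polynomial ℤ := P + P * dA - q * s with hr
  have hC2 : (C 2 : Polynomial ℤ) = 2 := map_ofNat C 2
  -- basic degree facts
  have h2M : (1:ℕ) ≤ 2 ^ M := Nat.one_le_two_pow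
  have h2MN : (1:ℕ) ≤ 2 ^ (M + N) := Nat.one_le_two_pow
  have hle : (2:ℕ) ^ M ≤ 2 ^ (M + N) := Nat.pow_le_pow_right (by norm_num) (by omega)
  have hdbl : (2:ℕ) ^ (M + N + 1) = 2 * 2 ^ (M + N) := by ring
  have hPm : P.Monic := by
    have := (prodA M (N + 1)).1
    rwa [show M + (N + 1) = M + N + 1 from by ring] at this
  have hPd : P.natDegree = 2 ^ (M + N + 1) - 2 ^ M := by
    have := (prodA M (N + 1)).2
    rwa [show M + (N + 1) = M + N + 1 from by ring] at this
  have hEm : E.Monic := (prodA M N).1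
  have hEd : E.natDegree = 2 ^ (M + N) - 2 ^ M := (prodA M N).2
  have hAm := (a_monic_natDegree M).1
  have hAd := (a_monic_natDegree M).2
  have hBm := (a_monic_natDegree (M + N)).1
  have hBd := (a_monic_natDegree (M + N)).2
  have hBBm := (a_monic_natDegree (M + N + 1)).1
  have hBBd := (a_monic_natDegree (M + N + 1)).2
  have hdAd : dA.natDegree = 2 ^ M - 1 := (derivA M).1
  have hdAl : dA.leadingCoeff = 2 ^ M := by
    rw [leadingCoeff, hdAd]; exact (derivA M).2
  have hdBd : dB.natDegree = 2 ^ (M + N) - 1 := (derivA (M + N)).1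
  have hdBl : dB.leadingCoeff = 2 ^ (M + N) := by
    rw [leadingCoeff, hdBd]; exact (derivA (M + N)).2
  have hdB0 : dB ≠ 0 := leadingCoeff_ne_zero.mp (by rw [hdBl]; positivity)
  -- facts about s = a (M+1) + X
  have hsd : s.natDegree = 2 ^ M := by
    rcases Nat.eq_zero_or_pos M with h0 | h0
    · subst h0
      rw [hs, a_one, show (X : Polynomial ℤ) + X = C 2 * X from by rw [hC2]; ring,
        natDegree_C_mul (by norm_num), natDegree_X, pow_zero]
    · rw [hs, natDegree_add_eq_left_of_degree_lt, hAd]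
      rw [degree_X, degree_eq_natDegree hAm.ne_zero, hAd]
      exact_mod_cast Nat.one_lt_two_pow_iff.mpr (by omega)
  have hsl : s.leadingCoeff = if M = 0 then 2 else 1 := by
    rcases Nat.eq_zero_or_pos M with h0 | h0
    · subst h0
      rw [if_pos rfl, hs, a_one, show (X : Polynomial ℤ) + X = C 2 * X from by rw [hC2]; ring,
        leadingCoeff_mul, leadingCoeff_C, leadingCoeff_X, mul_one]
    · rw [if_neg (by omega), hs]
      have : (a (M+1) + X).Monic := by
        apply hAm.add_of_left
        rw [degree_X, degree_eq_natDegree hAm.ne_zero, hAd]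
        exact_mod_cast Nat.one_lt_two_pow_iff.mpr (by omega)
      exact this
  have hs0 : s ≠ 0 := leadingCoeff_ne_zero.mp (by rw [hsl]; split_ifs <;> norm_num)
  -- g is monic of degree 2^(M+N+1)
  have hAltB : (a (M + 1)).degree < (a (M + N + 2)).degree := by
    rw [degree_eq_natDegree hAm.ne_zero, degree_eq_natDegree hBBm.ne_zero, hAd, hBBd]
    exact_mod_cast Nat.pow_lt_pow_right (by norm_num) (by omega)
  have hgm : g.Monic := hBBm.add_of_left hAltB
  have hgd : g.natDegree = 2 ^ (M + N + 1) := by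
    rw [hg, natDegree_add_eq_left_of_degree_lt hAltB, hBBd]
  -- the master identity
  have hPE : P = E * a (M + N + 1) := by
    rw [hP, hE, Finset.prod_Icc_succ_top (by omega)]
  have hgsq : a (M + N + 2) = (a (M + N + 1)) ^ 2 + X := rfl
  have hID : P * derivative g = q * g + r := by
    rw [hr, hq, hs, hg, hgsq, hPE, hdA, hdB]
    simp only [derivative_add, derivative_pow, derivative_X]
    push_cast
    simp only [hC2]
    ring
  -- coefficient computations
  have hPcoeff : P.coeff (2 ^ (M + N + 1) - 1) = if M = 0 then 1 else 0 := by
    rcases Nat.eq_zero_or_pos M with h0 | h0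
    · subst h0
      rw [if_pos rfl, show (2:ℕ) ^ (0 + N + 1) - 1 = 2 ^ (0 + N + 1) - 2 ^ 0 from by
        simp, ← hPd]
      exact hPm.coeff_natDegree
    · rw [if_neg (by omega)]
      apply coeff_eq_zero_of_natDegree_lt
      rw [hPd]
      have : (2:ℕ) ≤ 2 ^ M := by
        calc (2:ℕ) = 2 ^ 1 := by norm_num
        _ ≤ 2 ^ M := Nat.pow_le_pow_right (by norm_num) (by omega)
      omega
  have hPdAcoeff : (P * dA).coeff (2 ^ (M + N + 1) - 1) = 2 ^ M := by
    rw [show (2:ℕ) ^ (M + N + 1) - 1 = P.natDegree + dA.natDegree from by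
      rw [hPd, hdAd]; omega]
    rw [coeff_mul_degree_add_degree, hPm.leadingCoeff, one_mul, hdAl]
  have hq0 : (2 * E : Polynomial ℤ) ≠ 0 := by
    have : (2 * E : Polynomial ℤ).leadingCoeff = 2 := by
      rw [show (2 * E : Polynomial ℤ) = C 2 * E from by rw [hC2],
        leadingCoeff_mul, leadingCoeff_C, hEm.leadingCoeff, mul_one]
    exact leadingCoeff_ne_zero.mp (by rw [this]; norm_num)
  have hqd : q.natDegree = 2 ^ (M + N + 1) - 1 - 2 ^ M := by
    rw [hq, natDegree_mul hq0 hdB0,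
      show (2 * E : Polynomial ℤ) = C 2 * E from by rw [hC2],
      natDegree_C_mul (by norm_num : (2:ℤ) ≠ 0), hEd, hdBd]
    omega
  have hql : q.leadingCoeff = 2 ^ (M + N + 1) := by
    rw [hq, show (2 * E * dB : Polynomial ℤ) = C 2 * E * dB from by rw [hC2],
      leadingCoeff_mul, leadingCoeff_mul, leadingCoeff_C, hEm.leadingCoeff, mul_one, hdBl]
    ring
  have hqscoeff : (q * s).coeff (2 ^ (M + N + 1) - 1)
      = 2 ^ (M + N + 1) * (if M = 0 then 2 else 1) := by
    rw [show (2:ℕ) ^ (M + N + 1) - 1 = q.natDegree + s.natDegree from by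
      rw [hqd, hsd]; omega]
    rw [coeff_mul_degree_add_degree, hql, hsl]
  have hrcoeff : r.coeff (2 ^ (M + N + 1) - 1)
      = (if M = 0 then 1 else 0) + 2 ^ M - 2 ^ (M + N + 1) * (if M = 0 then 2 else 1) := by
    rw [hr, coeff_sub, coeff_add, hPcoeff, hPdAcoeff, hqscoeff]
  -- degree bound for r
  have hrd : r.natDegree ≤ 2 ^ (M + N + 1) - 1 := by
    apply le_trans (natDegree_sub_le _ _)
    apply max_le
    · apply le_trans (natDegree_add_le _ _)
      apply max_le
      · rw [hPd]; omega
      · apply le_trans (natDegree_mul_le)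
        rw [hPd, hdAd]; omega
    · apply le_trans (natDegree_mul_le)
      rw [hqd, hsd]; omega
  have hrdeg : r.degree < ((2:ℕ) ^ (M + N + 1) : ℕ) := by
    apply lt_of_le_of_lt degree_le_natDegree
    exact_mod_cast lt_of_le_of_lt (Nat.cast_le.mpr hrd)
      (Nat.cast_lt.mpr (by omega) : ((2 ^ (M+N+1) - 1 : ℕ) : WithBot ℕ) < _)
  -- transfer to ℂ
  have hgmC : (c2 g).Monic := hgm.map _
  have hgdC : (c2 g).natDegree = 2 ^ (M + N + 1) := by
    rw [c2, hgm.natDegree_map, hgd]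
  have hidC : c2 P * derivative (c2 g) = c2 q * c2 g + c2 r := by
    unfold c2
    rw [derivative_map, ← Polynomial.map_mul, ← Polynomial.map_mul,
      ← Polynomial.map_add, hID]
  have hrdC : (c2 r).degree < ((c2 g).natDegree : ℕ) := by
    rw [hgdC]
    exact lt_of_le_of_lt (degree_map_le) hrdeg
  have := T_eq_coeff (c2 P) (c2 g) (c2 q) (c2 r) hgmC hidC hrdC
  rw [this, hgdC, c2, coeff_map, hrcoeff]
  simp


/-- Remark 2.12: for `m ≥ 2`, `n ≥ 1`,
`T(∏_{i=m−1}^{m+n−2} a_i, a_{m+n−1} + a_{m−1})` equals `2 − 2^{n+1}` if `m = 2`,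
and `2^{m−2} − 2^{m+n−2}` if `m ≥ 3`. -/
theorem T_prod_formula (m n : ℕ) (hm : 2 ≤ m) (hn : 1 ≤ n) :
    T (c2 (∏ i ∈ Icc (m - 1) (m + n - 2), a i)) (c2 (a (m + n - 1) + a (m - 1)))
      = if m = 2 then 2 - 2 ^ (n + 1) else (2 : ℂ) ^ (m - 2) - 2 ^ (m + n - 2) := by
  obtain ⟨M, rfl⟩ := Nat.exists_eq_add_of_le hm
  obtain ⟨N, rfl⟩ := Nat.exists_eq_add_of_le hn
  rw [show 2 + M - 1 = M + 1 from by omega,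
    show 2 + M + (1 + N) - 2 = M + N + 1 from by omega,
    show 2 + M + (1 + N) - 1 = M + N + 2 from by omega,
    show 2 + M - 2 = M from by omega,
    main M N]
  by_cases h0 : M = 0
  · subst h0
    rw [if_pos rfl, if_pos rfl]
    push_cast
    ring_nf
  · simp only [if_neg h0, if_neg (show ¬(2 + M = 2) from by omega)]
    push_cast
    ring
end
end

section
/- Let m ≥ 2, n ≥ 1, and 1 ≤ k ≤ 2^{m−2} − 2. Then T(c^k · ∏_{j=m−1}^{m+n−2} a_j, a_{m+n−1} + a_{m−1}) = (2^{−n} − 1) · T(c^k, a_{m+n−1} + a_{m−1}). -/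
open Polynomial Finset

noncomputable section

lemma sum_map_eval_eq (s : Multiset ℂ) (f : Polynomial ℂ) :
    (s.map (fun r => f.eval r)).sum
      = ((f * derivative (s.map (fun r => X - C r)).prod) %ₘ (s.map (fun r => X - C r)).prod).coeff
          (Multiset.card s - 1) := by
  induction s using Multiset.induction_on generalizing f with
  | empty => simp
  | cons r t ih =>
    set h : Polynomial ℂ := (t.map (fun r => X - C r)).prod with hh
    have hmono : h.Monic :=
      monic_multiset_prod_of_monic _ _ (fun i _ => monic_X_sub_C i)
    have hdeg : h.natDegree = Multiset.card t := by
      have hmon : ∀ f ∈ t.map (fun r => (X : Polynomial ℂ) - C r), f.Monic := by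
        simp only [Multiset.mem_map]
        rintro f ⟨i, _, rfl⟩
        exact monic_X_sub_C i
      rw [hh, natDegree_multiset_prod_of_monic _ hmon, Multiset.map_map]
      simp [Function.comp_def]
    have hprod : ((r ::ₘ t).map (fun r => X - C r)).prod = (X - C r) * h := by
      simp [hh]
    set g : Polynomial ℂ := (X - C r) * h with hg
    have hgm : g.Monic := (monic_X_sub_C r).mul hmono
    have hgdeg : g.natDegree = Multiset.card t + 1 := by
      rw [hg, natDegree_mul (X_sub_C_ne_zero r) hmono.ne_zero, natDegree_X_sub_C, hdeg]; omega
    -- decomposition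
    obtain ⟨f₁, hf₁⟩ := X_sub_C_dvd_sub_C_eval (a := r) (p := f)
    set w : Polynomial ℂ := (f * derivative h) %ₘ h with hw
    have hwlt : w.degree < h.degree := degree_modByMonic_lt _ hmono
    have hdiv : f * derivative h = h * (f * derivative h /ₘ h) + w :=
      (modByMonic_add_div _ h).symm.trans (add_comm _ _)
    have hdg : derivative g = h + (X - C r) * derivative h := by
      rw [hg, derivative_mul, derivative_sub, derivative_X, derivative_C]; ring
    have key : f * derivative g = (C (f.eval r) * h + (X - C r) * w)
        + g * (f₁ + (f * derivative h /ₘ h)) := by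
      have hf : f = C (f.eval r) + (X - C r) * f₁ := by
        rw [← hf₁]; ring
      calc f * derivative g = f * h + (X - C r) * (f * derivative h) := by rw [hdg]; ring
        _ = (C (f.eval r) + (X - C r) * f₁) * h
              + (X - C r) * (h * (f * derivative h /ₘ h) + w) := by rw [← hf, ← hdiv]
        _ = _ := by rw [hg]; ring
    have hdegρ : (C (f.eval r) * h + (X - C r) * w).degree < g.degree := by
      have hgd : g.degree = ((Multiset.card t + 1 : ℕ) : WithBot ℕ) := by
        rw [degree_eq_natDegree hgm.ne_zero, hgdeg]
      rw [hgd]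
      apply lt_of_le_of_lt (degree_add_le _ _)
      rw [max_lt_iff]
      constructor
      · apply lt_of_le_of_lt (degree_mul_le _ _)
        have : h.degree ≤ (Multiset.card t : WithBot ℕ) := by
          rw [← hdeg]; exact degree_le_natDegree
        calc (C (f.eval r)).degree + h.degree ≤ 0 + (Multiset.card t : WithBot ℕ) :=
              add_le_add degree_C_le this
          _ < _ := by
              rw [zero_add]
              exact_mod_cast WithBot.coe_lt_coe.mpr (Nat.lt_succ_self _)
      · rcases eq_or_ne w 0 with h0 | h0
        · rw [h0, mul_zero, degree_zero]
          exact WithBot.bot_lt_coe _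
        · have hwd := degree_eq_natDegree h0
          have hnat : w.natDegree < Multiset.card t := by
            have : w.degree < (Multiset.card t : WithBot ℕ) := by
              refine lt_of_lt_of_le hwlt ?_
              rw [← hdeg]; exact degree_le_natDegree
            rw [hwd] at this; exact_mod_cast this
          rw [degree_mul, degree_X_sub_C, hwd]
          exact_mod_cast (by omega : 1 + w.natDegree < Multiset.card t + 1)
    have hmod : (f * derivative g) %ₘ g = C (f.eval r) * h + (X - C r) * w :=
      (div_modByMonic_unique _ _ hgm ⟨key.symm, hdegρ⟩).2
    rw [Multiset.map_cons, Multiset.sum_cons, hprod, hmod]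
    have hcard : Multiset.card (r ::ₘ t) - 1 = Multiset.card t := by simp
    rw [hcard, coeff_add, coeff_C_mul]
    have hc1 : h.coeff (Multiset.card t) = 1 := by
      rw [← hdeg]; exact hmono.coeff_natDegree
    rw [hc1, mul_one]
    have hwcoeff : ((X - C r) * w).coeff (Multiset.card t)
        = w.coeff (Multiset.card t - 1) := by
      have hwc : w.coeff (Multiset.card t) = 0 := by
        apply coeff_eq_zero_of_degree_lt
        refine lt_of_lt_of_le hwlt ?_
        rw [← hdeg]; exact degree_le_natDegree
      rcases Nat.eq_zero_or_pos (Multiset.card t) with h0 | hpos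
      · have : w = 0 := by
          have : w.degree < 0 := by
            refine lt_of_lt_of_le hwlt ?_
            rw [degree_eq_natDegree hmono.ne_zero, hdeg, h0]; exact le_refl _
          exact degree_eq_bot.mp (by exact_mod_cast Nat.WithBot.lt_zero_iff.mp this)
        simp [this]
      · obtain ⟨d, hd'⟩ : ∃ d, Multiset.card t = d + 1 := ⟨Multiset.card t - 1, by omega⟩
        rw [hd'] at hwc ⊢
        rw [sub_mul, coeff_sub, coeff_X_mul, coeff_C_mul, hwc, mul_zero, sub_zero]
        simp
    rw [hwcoeff, ih]

lemma T_eq_coeff_s17 (f g : Polynomial ℂ) (hg : g.Monic) :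
    (g.roots.map (fun r => f.eval r)).sum
      = ((f * derivative g) %ₘ g).coeff (g.natDegree - 1) := by
  have hs : Splits g := IsAlgClosed.splits g
  have hprod : (g.roots.map (fun r => X - C r)).prod = g :=
    (hs.eq_prod_roots_of_monic hg).symm
  have hcard : Multiset.card g.roots = g.natDegree := (splits_iff_card_roots).mp hs
  have := sum_map_eval_eq g.roots f
  rwa [hprod, hcard] at this

lemma a_succ (i : ℕ) : a (i + 1) = a i ^ 2 + X := rfl

lemma deriv_a (i : ℕ) :
    derivative (a (i + 1)) = (2 * a i) * derivative (a i) + 1 := by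
  rw [a_succ, derivative_add, derivative_pow, derivative_X]
  have h2 : (C 2 : Polynomial ℤ) = 2 := by norm_num
  simp only [Nat.cast_ofNat, pow_one]
  rw [h2]
  ring

/-- sum of the suffix products of `2 * a j`. -/
lemma deriv_formula (M : ℕ) : ∀ r : ℕ,
    derivative (a (M + 1 + r))
      = (∏ j ∈ Ioc M (M + r), (2 * a j)) * derivative (a (M + 1))
        + ∑ i ∈ Ioc M (M + r), ∏ j ∈ Ioc i (M + r), (2 * a j) := by
  intro r
  induction r with
  | zero => simp
  | succ r ih =>
    have h1 : M + 1 + (r + 1) = (M + 1 + r) + 1 := by omega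
    have h2 : M + (r + 1) = (M + r) + 1 := by omega
    rw [h1, deriv_a, ih, h2]
    rw [prod_Ioc_succ_top (by omega), sum_Ioc_succ_top (by omega)]
    have h3 : ∀ i ∈ Ioc M (M + r),
        (∏ j ∈ Ioc i (M + r + 1), (2 * a j))
          = (∏ j ∈ Ioc i (M + r), (2 * a j)) * (2 * a (M + r + 1)) := by
      intro i hi
      rw [prod_Ioc_succ_top (by exact (mem_Ioc.mp hi).2)]
    rw [sum_congr rfl h3]
    rw [Ioc_self, prod_empty]
    rw [← sum_mul]
    rw [show a (M + 1 + r) = a (M + r + 1) by rw [show M + 1 + r = M + r + 1 by omega]]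
    set p := ∏ j ∈ Ioc M (M + r), (2 * a j) with hp
    set q := ∑ i ∈ Ioc M (M + r), ∏ j ∈ Ioc i (M + r), (2 * a j) with hq
    set b := 2 * a (M + r + 1) with hb
    ring

lemma monic_a (i : ℕ) : (a (i + 1)).Monic ∧ (a (i + 1)).natDegree = 2 ^ i := by
  induction i with
  | zero => simp [a_succ, a]
  | succ i ih =>
    obtain ⟨hm, hd⟩ := ih
    have h2 : (a (i+1) ^ 2).Monic := hm.pow 2
    have hd2 : (a (i+1) ^ 2).natDegree = 2 ^ (i+1) := by
      rw [natDegree_pow, hd]; ring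
    have hdX : (X : Polynomial ℤ).degree < (a (i+1) ^ 2).degree := by
      rw [degree_X, degree_eq_natDegree h2.ne_zero, hd2]
      exact_mod_cast Nat.one_lt_two_pow_iff.mpr (by omega)
    constructor
    · rw [a_succ]
      exact h2.add_of_left hdX
    · rw [a_succ, natDegree_add_eq_left_of_degree_lt hdX, hd2]

lemma nd_a_le (j : ℕ) : (a j).natDegree ≤ 2 ^ (j - 1) := by
  cases j with
  | zero => simp [a]
  | succ j => simp [(monic_a j).2]

lemma nd_two_a_le (j : ℕ) : (2 * a j).natDegree ≤ 2 ^ (j - 1) := by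
  refine natDegree_mul_le.trans ?_
  have : ((2 : Polynomial ℤ)).natDegree = 0 := by
    have : (2 : Polynomial ℤ) = C 2 := by norm_num
    rw [this, natDegree_C]
  rw [this, zero_add]
  exact nd_a_le j

lemma geom1 (l : ℕ) : ∀ r, l ≤ r → (∑ j ∈ Ioc l r, 2 ^ (j - 1)) + 2 ^ l = 2 ^ r := by
  intro r
  induction r with
  | zero => intro h; interval_cases l; simp
  | succ r ih =>
    intro h
    rcases Nat.lt_or_ge l (r + 1) with h' | h'
    · have hlr : l ≤ r := by omega
      rw [sum_Ioc_succ_top hlr]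
      have := ih hlr
      have he : r + 1 - 1 = r := by omega
      rw [he]
      rw [pow_succ]
      omega
    · have : l = r + 1 := by omega
      subst this
      simp

lemma geom2 (l : ℕ) : ∀ r, l ≤ r → (∑ j ∈ Ioc l r, 2 ^ j) + 2 ^ (l + 1) = 2 ^ (r + 1) := by
  intro r
  induction r with
  | zero => intro h; interval_cases l; simp
  | succ r ih =>
    intro h
    rcases Nat.lt_or_ge l (r + 1) with h' | h'
    · have hlr : l ≤ r := by omega
      rw [sum_Ioc_succ_top hlr]
      have := ih hlr
      rw [pow_succ 2 (r+1)]
      omega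
    · have : l = r + 1 := by omega
      subst this
      simp

lemma nd_P2 (s i : ℕ) (h : i ≤ s) :
    (∏ j ∈ Ioc i s, (2 * a j)).natDegree + 2 ^ i ≤ 2 ^ s := by
  have h1 : (∏ j ∈ Ioc i s, (2 * a j)).natDegree ≤ ∑ j ∈ Ioc i s, 2 ^ (j - 1) := by
    refine (natDegree_prod_le _ _).trans ?_
    exact Finset.sum_le_sum fun j _ => nd_two_a_le j
  have := geom1 i s h
  omega

lemma nd_R2 (r i : ℕ) (h : i ≤ r) :
    (∏ j ∈ Ioc i r, (4 * (a (j + 1) - X))).natDegree + 2 ^ (i + 1) ≤ 2 ^ (r + 1) := by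
  have h1 : (∏ j ∈ Ioc i r, (4 * (a (j + 1) - X))).natDegree ≤ ∑ j ∈ Ioc i r, 2 ^ j := by
    refine (natDegree_prod_le _ _).trans ?_
    refine Finset.sum_le_sum fun j _ => ?_
    refine natDegree_mul_le.trans ?_
    have h4 : ((4 : Polynomial ℤ)).natDegree = 0 := by
      have : (4 : Polynomial ℤ) = C 4 := by norm_num
      rw [this, natDegree_C]
    rw [h4, zero_add]
    refine (natDegree_sub_le _ _).trans ?_
    rw [(monic_a j).2, natDegree_X]
    exact max_le (le_refl _) (Nat.one_le_two_pow)
  have := geom2 i r h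
  omega

lemma prod_Ioc_bot {β : Type*} [CommMonoid β] (f : ℕ → β) {i r : ℕ} (h : i < r) :
    ∏ j ∈ Ioc i r, f j = f (i + 1) * ∏ j ∈ Ioc (i + 1) r, f j := by
  rw [← Finset.Icc_add_one_left_eq_Ioc, Icc_eq_cons_Ioc h, prod_cons]

lemma nd_num_mul_le (c p : Polynomial ℤ) (hc : c.natDegree = 0) :
    (c * p).natDegree ≤ p.natDegree := by
  refine natDegree_mul_le.trans ?_
  omega

lemma claimC (M N : ℕ) : ∀ d, d ≤ N →
    ((2 : Polynomial ℤ) ^ (d + 1) * (∏ j ∈ Ioc (M + N - d) (M + N + 1), (2 * a j))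
        - 4 * (a (M + N - d + 1) + X) * (∏ j ∈ Ioc (M + N - d) (M + N), (4 * (a (j + 1) - X)))).natDegree
      + 2 ^ (M + N - d + 1) ≤ 2 ^ (M + N + 1) + 1 := by
  intro d
  induction d with
  | zero =>
    intro _
    rw [Nat.sub_zero]
    have h1 : ∏ j ∈ Ioc (M + N) (M + N + 1), (2 * a j) = 2 * a (M + N + 1) := by
      rw [Nat.Ioc_succ_singleton, prod_singleton]
    have h2 : ∏ j ∈ Ioc (M + N) (M + N), (4 * (a (j + 1) - X)) = 1 := by
      rw [Ioc_self, prod_empty]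
    rw [h1, h2]
    have h3 : (2 : Polynomial ℤ) ^ (0 + 1) * (2 * a (M + N + 1))
        - 4 * (a (M + N + 1) + X) * 1 = -(4 * X) := by ring
    rw [h3, natDegree_neg]
    have h4 : ((4 : Polynomial ℤ) * X).natDegree ≤ 1 := by
      refine natDegree_mul_le.trans ?_
      have : (4 : Polynomial ℤ) = C 4 := by norm_num
      rw [this, natDegree_C, natDegree_X]
    omega
  | succ d ih =>
    intro hd
    have ihd := ih (by omega)
    set i : ℕ := M + N - (d + 1) with hi
    have hieq : M + N - d = i + 1 := by omega
    rw [hieq] at ihd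
    have hiN : i + 1 ≤ M + N := by omega
    have e1 : ∏ j ∈ Ioc i (M + N + 1), (2 * a j)
        = (2 * a (i + 1)) * ∏ j ∈ Ioc (i + 1) (M + N + 1), (2 * a j) :=
      prod_Ioc_bot _ (by omega)
    have e2 : ∏ j ∈ Ioc i (M + N), (4 * (a (j + 1) - X))
        = (4 * (a (i + 1 + 1) - X)) * ∏ j ∈ Ioc (i + 1) (M + N), (4 * (a (j + 1) - X)) :=
      prod_Ioc_bot _ (by omega)
    have e3 : a (i + 1 + 1) = a (i + 1) ^ 2 + X := a_succ (i + 1)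
    set P' := ∏ j ∈ Ioc (i + 1) (M + N + 1), (2 * a j) with hP'
    set R' := ∏ j ∈ Ioc (i + 1) (M + N), (4 * (a (j + 1) - X)) with hR'
    have key : (2 : Polynomial ℤ) ^ (d + 1 + 1) * (∏ j ∈ Ioc i (M + N + 1), (2 * a j))
        - 4 * (a (i + 1) + X) * (∏ j ∈ Ioc i (M + N), (4 * (a (j + 1) - X)))
        = 4 * a (i + 1) * ((2 : Polynomial ℤ) ^ (d + 1) * P' - 4 * (a (i + 1 + 1) + X) * R')
          + 16 * X * (2 * a (i + 1) - a (i + 1) ^ 2) * R' := by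
      rw [e1, e2, e3]
      ring
    rw [key]
    -- degree bounds
    have hndH' := ihd
    have hndR' := nd_R2 (M + N) (i + 1) hiN
    have hnda : (a (i + 1)).natDegree = 2 ^ i := (monic_a i).2
    have b1 : (4 * a (i + 1) * ((2 : Polynomial ℤ) ^ (d + 1) * P'
        - 4 * (a (i + 1 + 1) + X) * R')).natDegree
        ≤ 2 ^ i + ((2 : Polynomial ℤ) ^ (d + 1) * P' - 4 * (a (i + 1 + 1) + X) * R').natDegree := by
      refine natDegree_mul_le.trans ?_
      have : ((4 : Polynomial ℤ) * a (i + 1)).natDegree ≤ 2 ^ i := by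
        refine (nd_num_mul_le _ _ ?_).trans (le_of_eq hnda)
        have : (4 : Polynomial ℤ) = C 4 := by norm_num
        rw [this, natDegree_C]
      omega
    have b2 : (16 * X * (2 * a (i + 1) - a (i + 1) ^ 2) * R').natDegree
        ≤ 1 + 2 ^ (i + 1) + R'.natDegree := by
      have hb : ((16 : Polynomial ℤ) * X).natDegree ≤ 1 := by
        refine natDegree_mul_le.trans ?_
        have : (16 : Polynomial ℤ) = C 16 := by norm_num
        rw [this, natDegree_C, natDegree_X]
      have hc : ((16 : Polynomial ℤ) * X * (2 * a (i + 1) - a (i + 1) ^ 2)).natDegree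
          ≤ 1 + 2 ^ (i + 1) := by
        refine natDegree_mul_le.trans ?_
        have hs : (2 * a (i + 1) - a (i + 1) ^ 2).natDegree ≤ 2 ^ (i + 1) := by
          refine (natDegree_sub_le _ _).trans ?_
          have h2a : (2 * a (i + 1)).natDegree ≤ 2 ^ i := by
            refine (nd_num_mul_le _ _ ?_).trans (le_of_eq hnda)
            have : (2 : Polynomial ℤ) = C 2 := by norm_num
            rw [this, natDegree_C]
          have hsq : (a (i + 1) ^ 2).natDegree = 2 ^ (i + 1) := by
            rw [natDegree_pow, hnda]; ring
          rw [hsq]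
          have : 2 ^ i ≤ 2 ^ (i + 1) := Nat.pow_le_pow_right (by norm_num) (by omega)
          exact max_le (h2a.trans this) (le_refl _)
        omega
      exact (natDegree_mul_le (p := (16 : Polynomial ℤ) * X * (2 * a (i + 1) - a (i + 1) ^ 2)) (q := R')).trans
        (Nat.add_le_add_right hc _)
    have btot := (natDegree_add_le _ _).trans (max_le_max b1 b2)
    have hpow1 : (2:ℕ) ^ (i + 1) = 2 * 2 ^ i := by rw [pow_succ]; ring
    have hpow2 : (2:ℕ) ^ (i + 1 + 1) = 2 * 2 ^ (i + 1) := by rw [pow_succ]; ring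
    rw [← hR'] at hndR'
    refine le_trans (Nat.add_le_add_right btot _) ?_
    rcases max_cases (2 ^ i + ((2 : Polynomial ℤ) ^ (d + 1) * P' - 4 * (a (i + 1 + 1) + X) * R').natDegree)
      (1 + 2 ^ (i + 1) + R'.natDegree) with ⟨hmx, _⟩ | ⟨hmx, _⟩ <;> rw [hmx] <;> omega

lemma main_identity (M N k : ℕ) (hk1 : 1 ≤ k) (hk2 : k + 2 ≤ 2 ^ M) :
    ∃ Q W : Polynomial ℤ,
      ((X : Polynomial ℤ) ^ k * (∏ j ∈ Ioc M (M + N + 1), (2 * a j))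
          + ((2 : Polynomial ℤ) ^ (N + 1) - 1) * X ^ k)
        * derivative (a (M + N + 2) + a (M + 1))
      = (a (M + N + 2) + a (M + 1)) * Q + W
      ∧ W.natDegree + 2 ≤ 2 ^ (M + N + 1) := by
  -- abbreviations
  have hMN1 : M ≤ M + N := by omega
  have hMN2 : M ≤ M + N + 1 := by omega
  -- the derivative formula
  have hder : derivative (a (M + N + 2) + a (M + 1))
      = ((∏ j ∈ Ioc M (M + N + 1), (2 * a j)) + 1) * derivative (a (M + 1))
        + (∑ i ∈ Ioc M (M + N), ∏ j ∈ Ioc i (M + N + 1), (2 * a j)) + 1 := by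
    rw [derivative_add]
    have h1 : M + N + 2 = M + 1 + (N + 1) := by omega
    have h2 : M + (N + 1) = M + N + 1 := by omega
    rw [h1, deriv_formula M (N + 1), h2]
    rw [sum_Ioc_succ_top hMN1, Ioc_self, prod_empty]
    ring
  -- the square identity
  have hsq : ∀ i, i ≤ M + N →
      (∏ j ∈ Ioc i (M + N + 1), (2 * a j)) * (∏ j ∈ Ioc i (M + N + 1), (2 * a j))
        = 4 * (∏ j ∈ Ioc i (M + N), (4 * (a (j + 1) - X))) * (a (M + N + 2) - X) := by
    intro i hi
    rw [← prod_mul_distrib]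
    have h1 : ∀ j ∈ Ioc i (M + N + 1), (2 * a j) * (2 * a j) = 4 * (a (j + 1) - X) := by
      intro j _
      rw [a_succ]
      ring
    rw [prod_congr rfl h1, prod_Ioc_succ_top hi]
    have h2 : M + N + 1 + 1 = M + N + 2 := by omega
    rw [h2]
    ring
  -- the sum part
  have e_sum : ((X : Polynomial ℤ) ^ k * (∏ j ∈ Ioc M (M + N + 1), (2 * a j))
        + ((2 : Polynomial ℤ) ^ (N + 1) - 1) * X ^ k)
        * (∑ i ∈ Ioc M (M + N), ∏ j ∈ Ioc i (M + N + 1), (2 * a j))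
      = (a (M + N + 2) + a (M + 1))
          * (∑ i ∈ Ioc M (M + N), 4 * X ^ k * (∏ j ∈ Ioc M i, (2 * a j))
              * (∏ j ∈ Ioc i (M + N), (4 * (a (j + 1) - X))))
        + ∑ i ∈ Ioc M (M + N), X ^ k
            * (((2 : Polynomial ℤ) ^ (N + 1) - 1) * (∏ j ∈ Ioc i (M + N + 1), (2 * a j))
              - 4 * (a (M + 1) + X) * (∏ j ∈ Ioc M i, (2 * a j))
                * (∏ j ∈ Ioc i (M + N), (4 * (a (j + 1) - X)))) := by
    rw [Finset.mul_sum, Finset.mul_sum, ← Finset.sum_add_distrib]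
    refine Finset.sum_congr rfl ?_
    intro i hi
    obtain ⟨hi1, hi2⟩ := mem_Ioc.mp hi
    have hsplit : (∏ j ∈ Ioc M i, (2 * a j)) * (∏ j ∈ Ioc i (M + N + 1), (2 * a j))
        = ∏ j ∈ Ioc M (M + N + 1), (2 * a j) :=
      prod_Ioc_consecutive _ (le_of_lt hi1) (hi2.trans (Nat.le_succ _))
    have hsqi := hsq i hi2
    linear_combination (-(X ^ k * (∏ j ∈ Ioc i (M + N + 1), (2 * a j)))) * hsplit
      + (X ^ k * (∏ j ∈ Ioc M i, (2 * a j))) * hsqi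
  -- the u' part
  have e_u : ((X : Polynomial ℤ) ^ k * (∏ j ∈ Ioc M (M + N + 1), (2 * a j))
        + ((2 : Polynomial ℤ) ^ (N + 1) - 1) * X ^ k)
        * (((∏ j ∈ Ioc M (M + N + 1), (2 * a j)) + 1) * derivative (a (M + 1)))
      = (a (M + N + 2) + a (M + 1))
          * (4 * X ^ k * derivative (a (M + 1)) * (∏ j ∈ Ioc M (M + N), (4 * (a (j + 1) - X))))
        + X ^ k * derivative (a (M + 1))
            * ((2 : Polynomial ℤ) ^ (N + 1) * (∏ j ∈ Ioc M (M + N + 1), (2 * a j))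
              - 4 * (a (M + 1) + X) * (∏ j ∈ Ioc M (M + N), (4 * (a (j + 1) - X)))
              + ((2 : Polynomial ℤ) ^ (N + 1) - 1)) := by
    have hsqM := hsq M hMN1
    linear_combination (X ^ k * derivative (a (M + 1))) * hsqM
  refine ⟨4 * X ^ k * derivative (a (M + 1)) * (∏ j ∈ Ioc M (M + N), (4 * (a (j + 1) - X)))
      + ∑ i ∈ Ioc M (M + N), 4 * X ^ k * (∏ j ∈ Ioc M i, (2 * a j))
          * (∏ j ∈ Ioc i (M + N), (4 * (a (j + 1) - X))),
    X ^ k * derivative (a (M + 1))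
        * ((2 : Polynomial ℤ) ^ (N + 1) * (∏ j ∈ Ioc M (M + N + 1), (2 * a j))
          - 4 * (a (M + 1) + X) * (∏ j ∈ Ioc M (M + N), (4 * (a (j + 1) - X)))
          + ((2 : Polynomial ℤ) ^ (N + 1) - 1))
      + (∑ i ∈ Ioc M (M + N), X ^ k
            * (((2 : Polynomial ℤ) ^ (N + 1) - 1) * (∏ j ∈ Ioc i (M + N + 1), (2 * a j))
              - 4 * (a (M + 1) + X) * (∏ j ∈ Ioc M i, (2 * a j))
                * (∏ j ∈ Ioc i (M + N), (4 * (a (j + 1) - X)))))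
      + ((X : Polynomial ℤ) ^ k * (∏ j ∈ Ioc M (M + N + 1), (2 * a j))
          + ((2 : Polynomial ℤ) ^ (N + 1) - 1) * X ^ k), ?_, ?_⟩
  · rw [hder]
    linear_combination e_u + e_sum
  · -- degree bounds
    have hcst : (((2 : Polynomial ℤ) ^ (N + 1) - 1)).natDegree = 0 := by
      have h1 : (2 : Polynomial ℤ) = C 2 := by norm_num
      have : ((2 : Polynomial ℤ) ^ (N + 1) - 1) = C ((2 : ℤ) ^ (N + 1) - 1) := by
        rw [h1, ← C_pow, ← C_1, ← C_sub]
      rw [this, natDegree_C]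
    have h2M : 1 ≤ 2 ^ M := Nat.one_le_two_pow
    have hkM : k + 2 ≤ 2 ^ M := hk2
    have hp1 : (2:ℕ) ^ (M + 1) = 2 * 2 ^ M := by rw [pow_succ]; ring
    have hp2 : (2:ℕ) ^ (M + 1) ≤ 2 ^ (M + N + 1) :=
      Nat.pow_le_pow_right (by norm_num) (by omega)
    have hndu' : (derivative (a (M + 1))).natDegree ≤ 2 ^ M - 1 := by
      have := natDegree_derivative_le (a (M + 1))
      rwa [(monic_a M).2] at this
    have hC := claimC M N N (le_refl N)
    rw [Nat.add_sub_cancel] at hC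
    have hP2M := nd_P2 (M + N + 1) M hMN2
    have hRM := nd_R2 (M + N) M hMN1
    set n2 : ℕ := 2 ^ (M + N + 1) - 2 with hn2
    have hW1 : (X ^ k * derivative (a (M + 1))
        * ((2 : Polynomial ℤ) ^ (N + 1) * (∏ j ∈ Ioc M (M + N + 1), (2 * a j))
          - 4 * (a (M + 1) + X) * (∏ j ∈ Ioc M (M + N), (4 * (a (j + 1) - X)))
          + ((2 : Polynomial ℤ) ^ (N + 1) - 1))).natDegree ≤ n2 := by
      refine natDegree_mul_le.trans ?_
      have h1 : ((X : Polynomial ℤ) ^ k * derivative (a (M + 1))).natDegree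
          ≤ k + (derivative (a (M + 1))).natDegree := by
        refine natDegree_mul_le.trans ?_
        rw [natDegree_X_pow]
      have h2 : ((2 : Polynomial ℤ) ^ (N + 1) * (∏ j ∈ Ioc M (M + N + 1), (2 * a j))
          - 4 * (a (M + 1) + X) * (∏ j ∈ Ioc M (M + N), (4 * (a (j + 1) - X)))
          + ((2 : Polynomial ℤ) ^ (N + 1) - 1)).natDegree
          ≤ max ((2 : Polynomial ℤ) ^ (N + 1) * (∏ j ∈ Ioc M (M + N + 1), (2 * a j))
          - 4 * (a (M + 1) + X) * (∏ j ∈ Ioc M (M + N), (4 * (a (j + 1) - X)))).natDegree 0 :=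
        (natDegree_add_le _ _).trans (by rw [hcst])
      rcases max_cases ((2 : Polynomial ℤ) ^ (N + 1) * (∏ j ∈ Ioc M (M + N + 1), (2 * a j))
          - 4 * (a (M + 1) + X) * (∏ j ∈ Ioc M (M + N), (4 * (a (j + 1) - X)))).natDegree 0
        with ⟨hmx, _⟩ | ⟨hmx, _⟩ <;> rw [hmx] at h2 <;> omega
    have hSW : ((∑ i ∈ Ioc M (M + N), X ^ k
            * (((2 : Polynomial ℤ) ^ (N + 1) - 1) * (∏ j ∈ Ioc i (M + N + 1), (2 * a j))
              - 4 * (a (M + 1) + X) * (∏ j ∈ Ioc M i, (2 * a j))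
                * (∏ j ∈ Ioc i (M + N), (4 * (a (j + 1) - X)))))).natDegree ≤ n2 := by
      refine natDegree_sum_le_of_forall_le _ _ ?_
      intro i hi
      obtain ⟨hi1, hi2⟩ := mem_Ioc.mp hi
      have hP2i := nd_P2 (M + N + 1) i (by omega)
      have hpi := nd_P2 i M (le_of_lt hi1)
      have hRi := nd_R2 (M + N) i hi2
      have h2i : (2:ℕ) ^ (M + 1) ≤ 2 ^ i := Nat.pow_le_pow_right (by norm_num) hi1
      have hpowi : (2:ℕ) ^ (i + 1) = 2 * 2 ^ i := by rw [pow_succ]; ring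
      refine natDegree_mul_le.trans ?_
      rw [natDegree_X_pow]
      have hA : (((2 : Polynomial ℤ) ^ (N + 1) - 1)
          * (∏ j ∈ Ioc i (M + N + 1), (2 * a j))).natDegree
          ≤ (∏ j ∈ Ioc i (M + N + 1), (2 * a j)).natDegree := nd_num_mul_le _ _ hcst
      have hB : (4 * (a (M + 1) + X) * (∏ j ∈ Ioc M i, (2 * a j))
          * (∏ j ∈ Ioc i (M + N), (4 * (a (j + 1) - X)))).natDegree
          ≤ 2 ^ M + (∏ j ∈ Ioc M i, (2 * a j)).natDegree
            + (∏ j ∈ Ioc i (M + N), (4 * (a (j + 1) - X))).natDegree := by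
        refine natDegree_mul_le.trans ?_
        have hB1 : (4 * (a (M + 1) + X) * (∏ j ∈ Ioc M i, (2 * a j))).natDegree
            ≤ 2 ^ M + (∏ j ∈ Ioc M i, (2 * a j)).natDegree := by
          refine natDegree_mul_le.trans ?_
          have hB2 : ((4 : Polynomial ℤ) * (a (M + 1) + X)).natDegree ≤ 2 ^ M := by
            refine (nd_num_mul_le _ _ ?_).trans ?_
            · have : (4 : Polynomial ℤ) = C 4 := by norm_num
              rw [this, natDegree_C]
            · refine (natDegree_add_le _ _).trans ?_
              rw [(monic_a M).2, natDegree_X]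
              exact max_le (le_refl _) h2M
          omega
        omega
      have hsub := natDegree_sub_le (((2 : Polynomial ℤ) ^ (N + 1) - 1)
          * (∏ j ∈ Ioc i (M + N + 1), (2 * a j)))
        (4 * (a (M + 1) + X) * (∏ j ∈ Ioc M i, (2 * a j))
          * (∏ j ∈ Ioc i (M + N), (4 * (a (j + 1) - X))))
      rcases max_cases (((2 : Polynomial ℤ) ^ (N + 1) - 1)
          * (∏ j ∈ Ioc i (M + N + 1), (2 * a j))).natDegree
        (4 * (a (M + 1) + X) * (∏ j ∈ Ioc M i, (2 * a j))
          * (∏ j ∈ Ioc i (M + N), (4 * (a (j + 1) - X)))).natDegree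
        with ⟨hmx, _⟩ | ⟨hmx, _⟩ <;> rw [hmx] at hsub <;> omega
    have hD : ((X : Polynomial ℤ) ^ k * (∏ j ∈ Ioc M (M + N + 1), (2 * a j))
        + ((2 : Polynomial ℤ) ^ (N + 1) - 1) * X ^ k).natDegree ≤ n2 := by
      have h1 : ((X : Polynomial ℤ) ^ k * (∏ j ∈ Ioc M (M + N + 1), (2 * a j))).natDegree
          ≤ k + (∏ j ∈ Ioc M (M + N + 1), (2 * a j)).natDegree := by
        refine natDegree_mul_le.trans ?_
        rw [natDegree_X_pow]
      have h2 : ((((2 : Polynomial ℤ) ^ (N + 1) - 1)) * X ^ k).natDegree ≤ k := by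
        refine (nd_num_mul_le _ _ hcst).trans ?_
        rw [natDegree_X_pow]
      refine (natDegree_add_le _ _).trans ?_
      rcases max_cases ((X : Polynomial ℤ) ^ k * (∏ j ∈ Ioc M (M + N + 1), (2 * a j))).natDegree
        ((((2 : Polynomial ℤ) ^ (N + 1) - 1)) * X ^ k).natDegree
        with ⟨hmx, _⟩ | ⟨hmx, _⟩ <;> rw [hmx] <;> omega
    have htot := (natDegree_add_le _ _).trans
      (max_le ((natDegree_add_le _ _).trans (max_le hW1 hSW)) hD)
    omega

lemma T_add (f g h : Polynomial ℂ) : T (f + g) h = T f h + T g h := by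
  simp [T, eval_add, Multiset.sum_map_add]

lemma T_C_mul (z : ℂ) (f h : Polynomial ℂ) : T (C z * f) h = z * T f h := by
  simp [T, eval_mul, Multiset.sum_map_mul_left]

lemma T_eq (f g : Polynomial ℂ) (hg : g.Monic) :
    T f g = ((f * derivative g) %ₘ g).coeff (g.natDegree - 1) :=
  T_eq_coeff_s17 f g hg

/-- Lemma 3.6: for `1 ≤ k ≤ 2^{m−2} − 2`,
`T(c^k ∏_{j=m−1}^{m+n−2} a_j, a_{m+n−1} + a_{m−1}) = (2^{−n} − 1) T(c^k, a_{m+n−1} + a_{m−1})`. -/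
theorem T_full_product (m n k : ℕ) (hm : 2 ≤ m) (hn : 1 ≤ n)
    (hk1 : 1 ≤ k) (hk2 : k ≤ 2 ^ (m - 2) - 2) :
    T (c2 (X ^ k * ∏ j ∈ Icc (m - 1) (m + n - 2), a j)) (c2 (a (m + n - 1) + a (m - 1)))
      = ((1 : ℂ) / 2 ^ n - 1) * T (c2 (X ^ k)) (c2 (a (m + n - 1) + a (m - 1))) := by
  obtain ⟨M, rfl⟩ : ∃ M, m = M + 2 := ⟨m - 2, by omega⟩
  obtain ⟨N, rfl⟩ : ∃ N, n = N + 1 := ⟨n - 1, by omega⟩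
  rw [show M + 2 - 1 = M + 1 by omega, show M + 2 + (N + 1) - 2 = M + N + 1 by omega,
    show M + 2 + (N + 1) - 1 = M + N + 2 by omega] at *
  rw [show M + 2 - 2 = M by omega] at hk2
  have hk2' : k + 2 ≤ 2 ^ M := by
    have h2M : 1 ≤ 2 ^ M := Nat.one_le_two_pow
    omega
  rw [Finset.Icc_add_one_left_eq_Ioc]
  -- the monic denominator
  have hdlt : (a (M + 1)).degree < (a (M + N + 2)).degree := by
    rw [degree_eq_natDegree (monic_a M).1.ne_zero, degree_eq_natDegree (monic_a (M + N + 1)).1.ne_zero,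
      (monic_a M).2, (monic_a (M + N + 1)).2]
    exact_mod_cast Nat.pow_lt_pow_right (by norm_num) (by omega)
  have hmg : (a (M + N + 2) + a (M + 1)).Monic := (monic_a (M + N + 1)).1.add_of_left hdlt
  have hdg : (a (M + N + 2) + a (M + 1)).natDegree = 2 ^ (M + N + 1) := by
    rw [natDegree_add_eq_left_of_degree_lt hdlt, (monic_a (M + N + 1)).2]
  have hmgC : (c2 (a (M + N + 2) + a (M + 1))).Monic := hmg.map _
  have hdgC : (c2 (a (M + N + 2) + a (M + 1))).natDegree = 2 ^ (M + N + 1) := by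
    rw [c2, hmg.natDegree_map, hdg]
  obtain ⟨Q, W, hiden, hW⟩ := main_identity M N k hk1 hk2'
  -- map the identity to ℂ
  have hidenC : c2 ((X : Polynomial ℤ) ^ k * (∏ j ∈ Ioc M (M + N + 1), (2 * a j))
          + ((2 : Polynomial ℤ) ^ (N + 1) - 1) * X ^ k)
        * derivative (c2 (a (M + N + 2) + a (M + 1)))
      = c2 (a (M + N + 2) + a (M + 1)) * c2 Q + c2 W := by
    have h := congrArg (fun p => p.map (Int.castRingHom ℂ)) hiden
    simp only [Polynomial.map_mul, Polynomial.map_add, ← derivative_map] at h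
    simp only [c2, Polynomial.map_add, Polynomial.map_mul]
    exact h
  -- compute the remainder
  have hWC : (c2 W).degree < (c2 (a (M + N + 2) + a (M + 1))).degree := by
    have h1 : (c2 W).natDegree ≤ 2 ^ (M + N + 1) - 2 := by
      have := natDegree_map_le (f := Int.castRingHom ℂ) (p := W)
      rw [← c2] at this
      omega
    have h2 : (c2 W).degree ≤ ((2 ^ (M + N + 1) - 2 : ℕ) : WithBot ℕ) :=
      degree_le_natDegree.trans (by exact_mod_cast h1)
    refine lt_of_le_of_lt h2 ?_
    rw [degree_eq_natDegree hmgC.ne_zero, hdgC]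
    have h3 : 2 ≤ 2 ^ (M + N + 1) := by
      have : (2:ℕ) ^ 1 ≤ 2 ^ (M + N + 1) := Nat.pow_le_pow_right (by norm_num) (by omega)
      simpa using this
    exact_mod_cast (by omega : 2 ^ (M + N + 1) - 2 < 2 ^ (M + N + 1))
  have hmod : (c2 ((X : Polynomial ℤ) ^ k * (∏ j ∈ Ioc M (M + N + 1), (2 * a j))
          + ((2 : Polynomial ℤ) ^ (N + 1) - 1) * X ^ k)
        * derivative (c2 (a (M + N + 2) + a (M + 1)))) %ₘ c2 (a (M + N + 2) + a (M + 1))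
      = c2 W :=
    (div_modByMonic_unique (c2 Q) (c2 W) hmgC ⟨by linear_combination -hidenC, hWC⟩).2
  -- hence T of the numerator combination vanishes
  have hT0 : T (c2 ((X : Polynomial ℤ) ^ k * (∏ j ∈ Ioc M (M + N + 1), (2 * a j))
          + ((2 : Polynomial ℤ) ^ (N + 1) - 1) * X ^ k)) (c2 (a (M + N + 2) + a (M + 1))) = 0 := by
    rw [T_eq _ _ hmgC, hmod, hdgC]
    apply coeff_eq_zero_of_natDegree_lt
    have h1 : (c2 W).natDegree ≤ 2 ^ (M + N + 1) - 2 := by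
      have := natDegree_map_le (f := Int.castRingHom ℂ) (p := W)
      rw [← c2] at this
      omega
    omega
  -- rewrite the numerator combination
  have hsplit : ((X : Polynomial ℤ) ^ k * (∏ j ∈ Ioc M (M + N + 1), (2 * a j))
          + ((2 : Polynomial ℤ) ^ (N + 1) - 1) * X ^ k)
      = C ((2:ℤ) ^ (N + 1)) * (X ^ k * ∏ j ∈ Ioc M (M + N + 1), a j)
        + C ((2:ℤ) ^ (N + 1) - 1) * X ^ k := by
    have h1 : ∏ j ∈ Ioc M (M + N + 1), (2 * a j)
        = C ((2:ℤ) ^ (N + 1)) * ∏ j ∈ Ioc M (M + N + 1), a j := by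
      rw [prod_mul_distrib, prod_const, Nat.card_Ioc]
      have h2 : M + N + 1 - M = N + 1 := by omega
      rw [h2]
      have h3 : (2 : Polynomial ℤ) = C 2 := by norm_num
      rw [h3, ← C_pow]
    rw [h1]
    have h3 : (2 : Polynomial ℤ) = C 2 := by norm_num
    rw [h3, ← C_pow, ← C_1, ← C_sub]
    ring
  rw [hsplit] at hT0
  have hmapped : c2 (C ((2:ℤ) ^ (N + 1)) * (X ^ k * ∏ j ∈ Ioc M (M + N + 1), a j)
        + C ((2:ℤ) ^ (N + 1) - 1) * X ^ k)
      = C ((2:ℂ) ^ (N + 1)) * c2 (X ^ k * ∏ j ∈ Ioc M (M + N + 1), a j)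
        + C ((2:ℂ) ^ (N + 1) - 1) * c2 (X ^ k) := by
    simp only [c2, Polynomial.map_add, Polynomial.map_mul, map_C, Int.coe_castRingHom]
    push_cast
    ring
  rw [hmapped, T_add, T_C_mul, T_C_mul] at hT0
  have h2n : ((2:ℂ) ^ (N + 1)) ≠ 0 := pow_ne_zero _ two_ne_zero
  field_simp
  linear_combination hT0
end
end
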